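/- For every β > 0 and K > 0: min_{z ∈ [−1,1]} {J_β(z) − βK z²} = min_{z ∈ ℝ} G_{β,K}(z); both minima are attained; and the set of global minimum points of z ↦ J_β(z) − βK z² over [−1,1] coincides with the set of global minimum points of G_{β,K} over ℝ. -/

import Mathlib

/-!
`c_β` is smooth and convex, and its derivative
`c'_β(t) = 2e^{-β} sinh t / (1 + 2e^{-β} cosh t)` takes values in `[-1, 1]`. Taking `t = 2βKz`
in the supremum defining `J_β` shows that `G_{β,K}(z) ≤ J_β(z) − βKz²` on `[-1, 1]`. Conversely,
`G_{β,K}` is coercive, so it has global minimisers, and at each of them `z = c'_β(2βKz)`; there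
`z ∈ [-1, 1]` and, by the Fenchel equality `J_β(c'_β s) = s c'_β(s) − c_β(s)`, the two functions
agree. A minorant which touches the function at all of its own minimisers has the same minimum
and the same minimisers.
-/

noncomputable section

/-- `c_β(t) = log[(1 + e^{−β}(e^t + e^{−t}))/(1 + 2e^{−β})]`. -/
def cBeta (β t : ℝ) : ℝ :=
  Real.log ((1 + Real.exp (-β) * (Real.exp t + Real.exp (-t))) / (1 + 2 * Real.exp (-β)))

/-- `J_β(z) = sup_{t ∈ ℝ} {t z − c_β(t)}`, the Legendre–Fenchel transform of `c_β`
(finite on `[-1,1]`, where it is used below). -/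
def Jbeta (β z : ℝ) : ℝ := ⨆ t : ℝ, (t * z - cBeta β t)

/-- `G_{β,K}(z) = βK z² − c_β(2βK z)`. -/
def Gfun (β K z : ℝ) : ℝ := β * K * z ^ 2 - cBeta β (2 * β * K * z)

open Real Set Filter

def cBetaDeriv (β t : ℝ) : ℝ := 2 * exp (-β) * sinh t / (1 + 2 * exp (-β) * cosh t)

section cBeta

variable (β : ℝ)

lemma cBeta_eq_log_cosh (t : ℝ) :
    cBeta β t = log (1 + 2 * exp (-β) * cosh t) - log (1 + 2 * exp (-β)) := by
  rw [cBeta, cosh_eq, log_div (by positivity) (by positivity)]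
  ring_nf

lemma cBeta_zero : cBeta β 0 = 0 := by simp [cBeta_eq_log_cosh]

lemma hasDerivAt_cBeta (t : ℝ) : HasDerivAt (cBeta β) (cBetaDeriv β t) t := by
  have h := (((hasDerivAt_cosh t).const_mul (2 * exp (-β))).const_add 1).log (by positivity)
  rw [funext (cBeta_eq_log_cosh β)]
  simpa [cBetaDeriv] using h.sub_const (log (1 + 2 * exp (-β)))

lemma differentiable_cBeta : Differentiable ℝ (cBeta β) :=
  fun t => (hasDerivAt_cBeta β t).differentiableAt

lemma deriv_cBeta : deriv (cBeta β) = cBetaDeriv β :=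
  funext fun t => (hasDerivAt_cBeta β t).deriv

lemma abs_cBetaDeriv_le_one (t : ℝ) : |cBetaDeriv β t| ≤ 1 := by
  have ha : 0 < 2 * exp (-β) := by positivity
  have hsinh : |sinh t| ≤ cosh t := by
    rw [abs_sinh, ← cosh_abs t]
    exact (sinh_lt_cosh _).le
  have hD : 0 < 1 + 2 * exp (-β) * cosh t := by positivity
  rw [cBetaDeriv, abs_div, abs_mul, abs_of_pos ha, abs_of_pos hD, div_le_one hD]
  nlinarith [mul_le_mul_of_nonneg_left hsinh ha.le]

-- The numerators compare through `sinh s cosh t - cosh s sinh t = sinh (s - t)`.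
lemma monotone_cBetaDeriv : Monotone (cBetaDeriv β) := by
  intro s t hst
  have ha : 0 < 2 * exp (-β) := by positivity
  have hsinh : sinh s ≤ sinh t := sinh_le_sinh.mpr hst
  have hsinh_sub : sinh (s - t) ≤ 0 := sinh_nonpos_iff.mpr (by linarith)
  rw [sinh_sub] at hsinh_sub
  rw [cBetaDeriv, cBetaDeriv, div_le_div_iff₀ (by positivity) (by positivity)]
  nlinarith [mul_le_mul_of_nonneg_left hsinh ha.le,
    mul_nonpos_of_nonneg_of_nonpos (sq_nonneg (2 * exp (-β))) hsinh_sub]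

lemma convexOn_cBeta : ConvexOn ℝ univ (cBeta β) :=
  (deriv_cBeta β ▸ monotone_cBetaDeriv β).convexOn_univ_of_deriv (differentiable_cBeta β)

lemma lipschitzWith_cBeta : LipschitzWith 1 (cBeta β) :=
  lipschitzWith_of_nnnorm_deriv_le (differentiable_cBeta β) <| by
    simpa [deriv_cBeta] using! abs_cBetaDeriv_le_one β

lemma cBeta_le_abs (t : ℝ) : cBeta β t ≤ |t| := by
  simpa [cBeta_zero, dist_eq_norm] using
    (le_abs_self _).trans ((lipschitzWith_cBeta β).dist_le_mul t 0)

lemma abs_sub_le_cBeta (t : ℝ) : |t| - β - log (1 + 2 * exp (-β)) ≤ cBeta β t := by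
  have hexp : exp |t| ≤ 2 * cosh t := by
    rw [← cosh_abs, ← cosh_add_sinh |t|]
    linarith [sinh_lt_cosh |t|]
  have hexp' : exp (|t| - β) ≤ 1 + 2 * exp (-β) * cosh t := by
    rw [sub_eq_add_neg, exp_add]
    nlinarith [exp_pos (-β)]
  rw [cBeta_eq_log_cosh]
  linarith [(le_log_iff_exp_le (by positivity)).mpr hexp']

end cBeta

section Jbeta

variable (β : ℝ) {z : ℝ}

lemma bddAbove_range_mul_sub_cBeta (hz : z ∈ Icc (-1 : ℝ) 1) :
    BddAbove (range fun t => t * z - cBeta β t) := by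
  refine ⟨β + log (1 + 2 * exp (-β)), forall_mem_range.2 fun t => ?_⟩
  have htz : t * z ≤ |t| := by
    calc t * z ≤ |t| * |z| := (le_abs_self _).trans (abs_mul t z).le
      _ ≤ |t| := mul_le_of_le_one_right (abs_nonneg t) (abs_le.2 hz)
  linarith [abs_sub_le_cBeta β t]

lemma mul_sub_cBeta_le_Jbeta (hz : z ∈ Icc (-1 : ℝ) 1) (t : ℝ) :
    t * z - cBeta β t ≤ Jbeta β z :=
  le_ciSup (bddAbove_range_mul_sub_cBeta β hz) t

-- The supremum is attained at `t = s`: `t ↦ c_β t - t c'_β s` is convex with vanishing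
-- derivative at `s`.
lemma Jbeta_cBetaDeriv (s : ℝ) : Jbeta β (cBetaDeriv β s) = s * cBetaDeriv β s - cBeta β s := by
  set z := cBetaDeriv β s
  have hconv : ConvexOn ℝ univ fun t => cBeta β t - t * z :=
    (convexOn_cBeta β).sub (((LinearMap.mul ℝ ℝ).flip z).concaveOn convex_univ)
  have hderiv : HasDerivAt (fun t => cBeta β t - t * z) 0 s :=
    ((hasDerivAt_cBeta β s).sub ((hasDerivAt_id s).mul_const z)).congr_deriv (by simp [z])
  have hmin : IsMinOn (fun t => cBeta β t - t * z) univ s :=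
    hconv.isMinOn_of_rightDeriv_eq_zero (by simp)
      (hderiv.hasDerivWithinAt.derivWithin (uniqueDiffWithinAt_Ioi s))
  refine le_antisymm (ciSup_le fun t => ?_)
    (mul_sub_cBeta_le_Jbeta β (abs_le.1 (abs_cBetaDeriv_le_one β s)) s)
  linarith [isMinOn_univ_iff.1 hmin t]

end Jbeta

section Gfun

variable (β K : ℝ) {z : ℝ}

lemma Gfun_le_Jbeta_sub (hz : z ∈ Icc (-1 : ℝ) 1) :
    Gfun β K z ≤ Jbeta β z - β * K * z ^ 2 := by
  rw [Gfun]
  linear_combination mul_sub_cBeta_le_Jbeta β hz (2 * β * K * z)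

lemma hasDerivAt_Gfun (z : ℝ) :
    HasDerivAt (Gfun β K) (2 * β * K * (z - cBetaDeriv β (2 * β * K * z))) z := by
  have hsq : HasDerivAt (fun z : ℝ => β * K * z ^ 2) (β * K * (2 * z)) z := by
    simpa using (hasDerivAt_pow 2 z).const_mul (β * K)
  have hc :=
    (hasDerivAt_cBeta β (2 * β * K * z)).comp z ((hasDerivAt_id z).const_mul (2 * β * K))
  exact (hsq.sub hc).congr_deriv (by ring)

lemma continuous_Gfun : Continuous (Gfun β K) :=
  continuous_iff_continuousAt.2 fun z => (hasDerivAt_Gfun β K z).continuousAt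

-- `c_β(t) ≤ |t|` gives `G_{β,K}(z) ≥ βK|z|(|z| - 2)`.
lemma Gfun_nonneg_of_two_le_abs (hβK : 0 ≤ β * K) (hz : 2 ≤ |z|) : 0 ≤ Gfun β K z := by
  have habs : |2 * β * K * z| = 2 * (β * K) * |z| := by
    rw [show 2 * β * K * z = 2 * (β * K) * z by ring, abs_mul,
      abs_of_nonneg (mul_nonneg zero_le_two hβK)]
  have hc := cBeta_le_abs β (2 * β * K * z)
  rw [Gfun]
  nlinarith [mul_nonneg (mul_nonneg hβK (abs_nonneg z)) (sub_nonneg.2 hz), sq_abs z]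

lemma exists_isMinOn_Gfun (hβK : 0 ≤ β * K) : ∃ z, IsMinOn (Gfun β K) univ z := by
  have hG0 : Gfun β K 0 = 0 := by simp [Gfun, cBeta_zero]
  obtain ⟨z, hz⟩ := (continuous_Gfun β K).exists_forall_le' 0 <|
    (tendsto_norm_cocompact_atTop.eventually_ge_atTop 2).mono fun z hz =>
      hG0.trans_le (Gfun_nonneg_of_two_le_abs β K hβK hz)
  exact ⟨z, isMinOn_univ_iff.2 hz⟩

lemma eq_cBetaDeriv_of_isMinOn_Gfun (hβK : β * K ≠ 0) (hz : IsMinOn (Gfun β K) univ z) :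
    z = cBetaDeriv β (2 * β * K * z) := by
  have h := (hz.isLocalMin univ_mem).hasDerivAt_eq_zero (hasDerivAt_Gfun β K z)
  have h2βK : 2 * β * K ≠ 0 := by rw [mul_assoc]; exact mul_ne_zero two_ne_zero hβK
  exact sub_eq_zero.1 ((mul_eq_zero.1 h).resolve_left h2βK)

lemma Jbeta_sub_eq_Gfun_of_isMinOn (hβK : β * K ≠ 0) (hz : IsMinOn (Gfun β K) univ z) :
    z ∈ Icc (-1 : ℝ) 1 ∧ Jbeta β z - β * K * z ^ 2 = Gfun β K z := by
  have hz' := eq_cBetaDeriv_of_isMinOn_Gfun β K hβK hz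
  have hJ := Jbeta_cBetaDeriv β (2 * β * K * z)
  rw [← hz'] at hJ
  refine ⟨abs_le.1 (hz' ▸ abs_cBetaDeriv_le_one β _), ?_⟩
  rw [hJ, Gfun]
  ring

end Gfun

section Minorant

variable {α γ : Type*} {f g : α → γ} {s : Set α} {z z₀ : α}

lemma IsMinOn.of_minorant [Preorder γ] (hg : IsMinOn g univ z) (hle : ∀ x ∈ s, g x ≤ f x)
    (heq : f z = g z) : IsMinOn f s z :=
  isMinOn_iff.2 fun x hx => heq.trans_le ((isMinOn_univ_iff.1 hg x).trans (hle x hx))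

lemma mem_and_isMinOn_iff_of_minorant [Preorder γ] (hle : ∀ x ∈ s, g x ≤ f x)
    (hmin : ∀ z, IsMinOn g univ z → z ∈ s ∧ f z = g z) (hz₀ : IsMinOn g univ z₀) :
    z ∈ s ∧ IsMinOn f s z ↔ IsMinOn g univ z := by
  obtain ⟨hz₀s, hz₀eq⟩ := hmin z₀ hz₀
  constructor
  · rintro ⟨hzs, hz⟩
    refine isMinOn_univ_iff.2 fun x => ?_
    calc g z ≤ f z := hle z hzs
      _ ≤ f z₀ := isMinOn_iff.1 hz z₀ hz₀s
      _ = g z₀ := hz₀eq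
      _ ≤ g x := isMinOn_univ_iff.1 hz₀ x
  · intro hz
    obtain ⟨hzs, hzeq⟩ := hmin z hz
    exact ⟨hzs, hz.of_minorant hle hzeq⟩

lemma IsMinOn.csInf_image_eq [ConditionallyCompleteLattice γ] (hf : IsMinOn f s z) (hz : z ∈ s) :
    sInf (f '' s) = f z :=
  IsLeast.csInf_eq ⟨mem_image_of_mem f hz, forall_mem_image.2 fun x hx => isMinOn_iff.1 hf x hx⟩

end Minorant

/-- For all `β > 0`, `K > 0`: the minimum of `J_β(z) − βKz²` over
`[-1,1]` and the minimum of `G_{β,K}` over `ℝ` are both attained and equal, and the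
two sets of global minimum points coincide. -/
theorem min_J_eq_min_G (β K : ℝ) (hβ : 0 < β) (hK : 0 < K) :
    (∃ z ∈ Set.Icc (-1 : ℝ) 1,
      IsMinOn (fun z => Jbeta β z - β * K * z ^ 2) (Set.Icc (-1 : ℝ) 1) z) ∧
    (∃ z : ℝ, IsMinOn (Gfun β K) Set.univ z) ∧
    sInf ((fun z => Jbeta β z - β * K * z ^ 2) '' Set.Icc (-1 : ℝ) 1) =
      sInf (Set.range (Gfun β K)) ∧
    {z : ℝ | z ∈ Set.Icc (-1 : ℝ) 1 ∧
        IsMinOn (fun z => Jbeta β z - β * K * z ^ 2) (Set.Icc (-1 : ℝ) 1) z} =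
      {z : ℝ | IsMinOn (Gfun β K) Set.univ z} := by
  have hβK : 0 < β * K := mul_pos hβ hK
  have hle : ∀ z ∈ Icc (-1 : ℝ) 1, Gfun β K z ≤ Jbeta β z - β * K * z ^ 2 :=
    fun _ => Gfun_le_Jbeta_sub β K
  have hmin := fun z => Jbeta_sub_eq_Gfun_of_isMinOn β K (z := z) hβK.ne'
  obtain ⟨z₀, hz₀⟩ := exists_isMinOn_Gfun β K hβK.le
  obtain ⟨hz₀mem, hz₀eq⟩ := hmin z₀ hz₀
  have hF := hz₀.of_minorant hle hz₀eq
  refine ⟨⟨z₀, hz₀mem, hF⟩, ⟨z₀, hz₀⟩, ?_, ?_⟩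
  · rw [hF.csInf_image_eq hz₀mem, ← image_univ, hz₀.csInf_image_eq (mem_univ z₀), hz₀eq]
  · ext z
    exact mem_and_isMinOn_iff_of_minorant hle hmin hz₀
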